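/- Let 𝒰 = 𝒢'_0 →(P_1,R_1) 𝒢'_1 →(P_2,R_2) ⋯ →(P_m,R_m) 𝒢'_m be a sequence of refinement steps, and let R be an entry region of 𝒢'_m. Then R is an entry region of the m-th breadth-first iterate 𝒢_m, where 𝒢_0 = 𝒰 and 𝒢_{k+1} = 𝒢_k ∪ { P ∩ preflow_F(bound(P, Q) ∩ preflow_F(Q)) | P ∈ 𝒫, Q ∈ 𝒢_k }. -/
import Mathlib


open Set

/-- Points of `ℝ^n`. -/
abbrev Vec (n : ℕ) := Fin n → ℝ

/-- A (strict or non-strict) affine half-space of `ℝ^ι`. -/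
def IsHalfspace {ι : Type} [Fintype ι] (H : Set (ι → ℝ)) : Prop :=
  ∃ (a : ι → ℝ) (b : ℝ), H = {x | (∑ i, a i * x i) < b} ∨ H = {x | (∑ i, a i * x i) ≤ b}

/-- A convex polyhedron: a finite intersection of half-spaces. -/
def IsConvexPolyhedron {ι : Type} [Fintype ι] (P : Set (ι → ℝ)) : Prop :=
  ∃ (k : ℕ) (Hs : Fin k → Set (ι → ℝ)), (∀ i, IsHalfspace (Hs i)) ∧ P = ⋂ i, Hs i

/-- A polyhedron: a finite union of convex polyhedra. -/
def IsPolyhedron {ι : Type} [Fintype ι] (G : Set (ι → ℝ)) : Prop :=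
  ∃ (k : ℕ) (Ps : Fin k → Set (ι → ℝ)), (∀ i, IsConvexPolyhedron (Ps i)) ∧ G = ⋃ i, Ps i

/-- The pre-flow of `G` with respect to `F`:
`preflow_F(G) = {u | ∃ δ ≥ 0, ∃ c ∈ F, u + δ·c ∈ G}`. -/
def preflow {n : ℕ} (F G : Set (Vec n)) : Set (Vec n) :=
  {u | ∃ δ : ℝ, 0 ≤ δ ∧ ∃ c ∈ F, u + δ • c ∈ G}

/-- The boundary of two sets: `bound(G, G') = (closure G ∩ G') ∪ (G ∩ closure G')`. -/
def bnd {n : ℕ} (G G' : Set (Vec n)) : Set (Vec n) :=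
  (closure G ∩ G') ∪ (G ∩ closure G')

/-- `prwa_F(U, V)`: the points from which a piecewise straight-line trajectory with slopes
in `F` reaches `U`, every point along the way (except possibly the final one) lying in
`(ℝ^n \ V) ∪ U`. -/
def prwa {n : ℕ} (F U V : Set (Vec n)) : Set (Vec n) :=
  {u | ∃ (k : ℕ) (d : Fin k → ℝ) (c : Fin k → Vec n) (p : Fin (k + 1) → Vec n),
    (∀ i, 0 ≤ d i) ∧ (∀ i, c i ∈ F) ∧ p 0 = u ∧
    (∀ i : Fin k, p i.succ = p i.castSucc + d i • c i) ∧
    p (Fin.last k) ∈ U ∧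
    ∀ (i : Fin k) (t : ℝ), 0 ≤ t → t ≤ d i →
      p i.castSucc + t • c i = p (Fin.last k) ∨ p i.castSucc + t • c i ∈ Vᶜ ∪ U}

/-- `rwa_F(U, V)`: the points from which some differentiable trajectory with derivative in
`F` may reach `U` while staying in `(ℝ^n \ V) ∪ U` beforehand. -/
def rwaSet {n : ℕ} (F U V : Set (Vec n)) : Set (Vec n) :=
  {u | ∃ f : ℝ → Vec n, Differentiable ℝ f ∧ f 0 = u ∧ (∀ t, 0 ≤ t → deriv f t ∈ F) ∧
    ∃ δ : ℝ, 0 ≤ δ ∧ f δ ∈ U ∧ ∀ δ', 0 ≤ δ' → δ' < δ → f δ' ∈ Vᶜ ∪ U}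

/-- `R` is an entry region of the family `𝒢` from the convex polyhedron `P ∈ 𝒫`:
a nonempty set `R = bound(P, Q) ∩ preflow_F(Q)` for some `Q ∈ 𝒢`. -/
def IsEntryRegionFrom {n : ℕ} (F : Set (Vec n)) (GG : Set (Set (Vec n)))
    (P R : Set (Vec n)) : Prop :=
  R.Nonempty ∧ ∃ Q ∈ GG, R = bnd P Q ∩ preflow F Q

/-- `R` is an entry region of the family `𝒢` (w.r.t. the family `𝒫`):
a nonempty set `R = bound(P, Q) ∩ preflow_F(Q)` with `P ∈ 𝒫` and `Q ∈ 𝒢`. -/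
def IsEntryRegion {n : ℕ} (F : Set (Vec n)) (PP GG : Set (Set (Vec n)))
    (R : Set (Vec n)) : Prop :=
  ∃ P ∈ PP, IsEntryRegionFrom F GG P R

/-- The refinement step `𝒢 →(P,R) 𝒢'`: `P ∈ 𝒫`, `R` is an entry region of `𝒢` from `P`,
and `𝒢' = 𝒢 ∪ {P ∩ preflow_F(R)}`. -/
def RefStep {n : ℕ} (F : Set (Vec n)) (PP : Set (Set (Vec n)))
    (GG : Set (Set (Vec n))) (P R : Set (Vec n)) (GG' : Set (Set (Vec n))) : Prop :=
  P ∈ PP ∧ IsEntryRegionFrom F GG P R ∧ GG' = GG ∪ {P ∩ preflow F R}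

/-- The breadth-first iterates: `𝒢_0 = 𝒰` and
`𝒢_{k+1} = 𝒢_k ∪ { P ∩ preflow_F(bound(P, Q) ∩ preflow_F(Q)) | P ∈ 𝒫, Q ∈ 𝒢_k }`. -/
def bfIter {n : ℕ} (F : Set (Vec n)) (PP UU : Set (Set (Vec n))) : ℕ → Set (Set (Vec n))
  | 0 => UU
  | k + 1 => bfIter F PP UU k ∪
      {X | ∃ P ∈ PP, ∃ Q ∈ bfIter F PP UU k,
            X = P ∩ preflow F (bnd P Q ∩ preflow F Q)}

/-- If `𝒰 = 𝒢'_0 →(P_1,R_1) ⋯ →(P_m,R_m) 𝒢'_m` is a sequence of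
refinement steps and `R` is an entry region of `𝒢'_m`, then `R` is an entry region of
the `m`-th breadth-first iterate `𝒢_m`. -/
theorem refSeq_entry_bfIter {n : ℕ} (F : Set (Vec n)) (hF : IsConvexPolyhedron F)
    (PP : Set (Set (Vec n))) (hPPfin : PP.Finite) (hPP : ∀ P ∈ PP, IsConvexPolyhedron P)
    (UU : Set (Set (Vec n))) (hUUfin : UU.Finite) (hUU : ∀ Q ∈ UU, IsConvexPolyhedron Q)
    (m : ℕ) (G : ℕ → Set (Set (Vec n))) (Ps Rs : ℕ → Set (Vec n))
    (hG0 : G 0 = UU)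
    (hstep : ∀ i < m, RefStep F PP (G i) (Ps i) (Rs i) (G (i + 1)))
    (R : Set (Vec n)) (hR : IsEntryRegion F PP (G m) R) :
    IsEntryRegion F PP (bfIter F PP UU m) R := by
  have key : ∀ i ≤ m, G i ⊆ bfIter F PP UU i := by
    intro i
    induction i with
    | zero => intro _; rw [hG0]; exact le_refl _
    | succ k ih =>
      intro hk X hX
      obtain ⟨hPk, ⟨hRne, Q, hQ, hRk⟩, hG'⟩ := hstep k (by omega)
      rw [hG'] at hX
      rcases hX with hX | hX
      · exact Or.inl (ih (by omega) hX)
      · exact Or.inr ⟨Ps k, hPk, Q, ih (by omega) hQ, by rw [hX, hRk]⟩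
  obtain ⟨P, hP, hRne, Q, hQ, hReq⟩ := hR
  exact ⟨P, hP, hRne, Q, key m le_rfl hQ, hReq⟩
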